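/- arXiv:2402.03150 — 7 statements merged into one kernel-verified Lean document; each statement's English description precedes it below -/
import Mathlib

section
/- Fix m ≥ 1. Suppose that for every maximal intersecting subfamily F of P([m]) there exist nonnegative reals (c_a)_{a∈[m]} with Σ_{a∈[m]} c_a = 1 and nonnegative reals (λ_{(A,B)})_{A⊆B⊆[m]} such that vec(F) = Σ_{a∈[m]} c_a · vec(Star_a(P([m]))) + Σ_{A⊆B⊆[m]} λ_{(A,B)} (e_B − e_A). Then for every subset-closed family G ⊆ P([m]) and every intersecting subfamily H ⊆ G there exists a ∈ [m] with |H| ≤ |Star_a(G)|; that is, some star is among the largest intersecting subfamilies of G. -/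
/-! Extend `H` to a maximal intersecting family `F` and sum both sides of the decomposition of
`vec(F)` over `G`. Since an intersecting family never contains both `D` and `Dᶜ`, the left side is
at least `2|G ∩ F| - |G| ≥ 2|H| - |G|`. The star `Star_a(P([m]))` contributes exactly
`2|Star_a(G)| - |G|`, and as `G` is closed under subsets, every edge `e_B - e_A` with `A ⊆ B`
contributes `0` or `-1`. So `2|H| - |G|` is at most a convex combination of the numbers
`2|Star_a(G)| - |G|`, hence at most the largest of them. -/

open Finset

variable {m : ℕ}

/-- A family of finsets is intersecting if any two members meet. -/
def IsIntersecting (F : Finset (Finset (Fin m))) : Prop :=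
  ∀ A ∈ F, ∀ B ∈ F, (A ∩ B).Nonempty

/-- A maximal intersecting subfamily of the power set of `Fin m`. -/
def IsMaxIntersecting (F : Finset (Finset (Fin m))) : Prop :=
  IsIntersecting F ∧ ∀ G : Finset (Finset (Fin m)), IsIntersecting G → F ⊆ G → G ⊆ F

/-- A family is subset-closed if it contains all subsets of its members. -/
def IsSubsetClosed (F : Finset (Finset (Fin m))) : Prop :=
  ∀ A ∈ F, ∀ B ⊆ A, B ∈ F

/-- The embedding of a family into `ℝ^{P([m])}`. -/
def famVec (F : Finset (Finset (Fin m))) : Finset (Fin m) → ℝ := fun A =>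
  if A ∈ F ∧ Aᶜ ∉ F then 1 else if A ∉ F ∧ Aᶜ ∈ F then -1 else 0

/-- The standard basis vector `e_A` of `ℝ^{P([m])}`. -/
def stdBasis (A : Finset (Fin m)) : Finset (Fin m) → ℝ := fun B => if B = A then 1 else 0

/-- The star of a family centered at `a`. -/
def starFam (a : Fin m) (F : Finset (Finset (Fin m))) : Finset (Finset (Fin m)) :=
  F.filter fun A => a ∈ A

/-- The setwise complement (dual) `F* = {Aᶜ : A ∈ F}`. -/
def dualFam (F : Finset (Finset (Fin m))) : Finset (Finset (Fin m)) :=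
  F.image fun A => Aᶜ

lemma IsIntersecting.exists_isMaxIntersecting_superset {H : Finset (Finset (Fin m))}
    (hH : IsIntersecting H) : ∃ F, IsMaxIntersecting F ∧ H ⊆ F := by
  obtain ⟨F, hHF, hF⟩ := _root_.Finite.exists_le_maximal (p := fun F => IsIntersecting F ∧ H ⊆ F)
    ⟨hH, subset_rfl⟩
  exact ⟨F, ⟨hF.prop.1, fun G hG hFG => hF.le_of_ge ⟨hG, hF.prop.2.trans hFG⟩ hFG⟩, hHF⟩

lemma IsIntersecting.compl_notMem {F : Finset (Finset (Fin m))} (hF : IsIntersecting F)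
    {A : Finset (Fin m)} (hA : A ∈ F) : Aᶜ ∉ F := fun hAc => by
  simpa using hF A hA Aᶜ hAc

lemma IsIntersecting.indicator_le_famVec {F : Finset (Finset (Fin m))} (hF : IsIntersecting F)
    (D : Finset (Fin m)) : 2 * (if D ∈ F then 1 else 0) - 1 ≤ famVec F D := by
  by_cases hD : D ∈ F
  · norm_num [famVec, hD, hF.compl_notMem hD]
  · unfold famVec
    split_ifs <;> norm_num

lemma IsIntersecting.two_mul_card_inter_sub_card_le_sum_famVec {F : Finset (Finset (Fin m))}
    (hF : IsIntersecting F) (G : Finset (Finset (Fin m))) :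
    2 * (#(G ∩ F) : ℝ) - #G ≤ ∑ D ∈ G, famVec F D := by
  calc 2 * (#(G ∩ F) : ℝ) - #G = ∑ D ∈ G, (2 * (if D ∈ F then 1 else 0) - 1) := by
        rw [sum_sub_distrib, ← mul_sum, sum_boole, filter_mem_eq_inter]
        simp
    _ ≤ ∑ D ∈ G, famVec F D := sum_le_sum fun D _ => hF.indicator_le_famVec D

lemma famVec_starFam_univ (a : Fin m) (D : Finset (Fin m)) :
    famVec (starFam a univ) D = if a ∈ D then 1 else -1 := by
  by_cases h : a ∈ D <;> simp [famVec, starFam, h]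

lemma sum_famVec_starFam_univ (a : Fin m) (G : Finset (Finset (Fin m))) :
    ∑ D ∈ G, famVec (starFam a univ) D = 2 * (#(starFam a G) : ℝ) - #G := by
  have hsplit := card_filter_add_card_filter_not (s := G) (fun D => a ∈ D)
  simp_rw [famVec_starFam_univ]
  rw [sum_ite, sum_const, sum_const, ← hsplit, starFam]
  push_cast
  ring

lemma sum_stdBasis (G : Finset (Finset (Fin m))) (A : Finset (Fin m)) :
    ∑ D ∈ G, stdBasis A D = if A ∈ G then 1 else 0 :=
  sum_ite_eq' G A fun _ => 1

lemma IsSubsetClosed.sum_stdBasis_sub_nonpos {G : Finset (Finset (Fin m))} (hG : IsSubsetClosed G)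
    {A B : Finset (Fin m)} (hAB : A ⊆ B) : ∑ D ∈ G, (stdBasis B D - stdBasis A D) ≤ 0 := by
  rw [sum_sub_distrib, sum_stdBasis, sum_stdBasis]
  by_cases hB : B ∈ G
  · simp [hB, hG B hB A hAB]
  · simp only [hB, if_false]
    split_ifs <;> norm_num

lemma exists_sum_starCombination_le {c : Fin m → ℝ} (hc0 : ∀ a, 0 ≤ c a) (hc1 : ∑ a, c a = 1)
    (G : Finset (Finset (Fin m))) :
    ∃ a, ∑ D ∈ G, (∑ a, c a • famVec (starFam a univ)) D ≤ 2 * (#(starFam a G) : ℝ) - #G := by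
  have hne : (univ : Finset (Fin m)).Nonempty := by
    by_contra h
    simp [not_nonempty_iff_eq_empty.mp h] at hc1
  obtain ⟨a₀, -, ha₀⟩ := exists_max_image univ (fun a => #(starFam a G)) hne
  refine ⟨a₀, ?_⟩
  calc ∑ D ∈ G, (∑ a, c a • famVec (starFam a univ)) D
      = ∑ a, c a * (2 * (#(starFam a G) : ℝ) - #G) := by
        simp only [Finset.sum_apply, Pi.smul_apply, smul_eq_mul]
        rw [sum_comm]
        simp only [← mul_sum, sum_famVec_starFam_univ]
    _ ≤ ∑ a, c a * (2 * (#(starFam a₀ G) : ℝ) - #G) := by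
        refine sum_le_sum fun a _ => mul_le_mul_of_nonneg_left ?_ (hc0 a)
        have : (#(starFam a G) : ℝ) ≤ #(starFam a₀ G) := by exact_mod_cast ha₀ a (mem_univ a)
        linarith
    _ = 2 * (#(starFam a₀ G) : ℝ) - #G := by rw [← sum_mul, hc1, one_mul]

lemma IsSubsetClosed.sum_edgeCombination_nonpos {G : Finset (Finset (Fin m))}
    (hG : IsSubsetClosed G) {lam : Finset (Fin m) → Finset (Fin m) → ℝ}
    (hlam : ∀ A B : Finset (Fin m), A ⊆ B → 0 ≤ lam A B) :
    ∑ D ∈ G, (∑ B : Finset (Fin m), ∑ A ∈ B.powerset, lam A B • (stdBasis B - stdBasis A)) D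
      ≤ 0 := by
  simp only [Finset.sum_apply, Pi.smul_apply, Pi.sub_apply, smul_eq_mul]
  rw [sum_comm]
  refine sum_nonpos fun B _ => ?_
  rw [sum_comm]
  refine sum_nonpos fun A hA => ?_
  have hAB := mem_powerset.mp hA
  rw [← mul_sum]
  exact mul_nonpos_of_nonneg_of_nonpos (hlam A B hAB) (hG.sum_stdBasis_sub_nonpos hAB)

theorem kleitman_implies_chvatal_general (m : ℕ)
    (hKleitman : ∀ F : Finset (Finset (Fin m)), IsMaxIntersecting F →
      ∃ (c : Fin m → ℝ) (lam : Finset (Fin m) → Finset (Fin m) → ℝ),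
        (∀ a, 0 ≤ c a) ∧ (∑ a, c a = 1) ∧
        (∀ A B : Finset (Fin m), A ⊆ B → 0 ≤ lam A B) ∧
        famVec F = (∑ a, c a • famVec (starFam a Finset.univ)) +
          ∑ B : Finset (Fin m), ∑ A ∈ B.powerset, lam A B • (stdBasis B - stdBasis A)) :
    ∀ G : Finset (Finset (Fin m)), IsSubsetClosed G →
      ∀ H ⊆ G, IsIntersecting H → ∃ a : Fin m, H.card ≤ (starFam a G).card := by
  intro G hG H hHG hH
  obtain ⟨F, hFmax, hHF⟩ := hH.exists_isMaxIntersecting_superset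
  obtain ⟨c, lam, hc0, hc1, hlam, hdecomp⟩ := hKleitman F hFmax
  obtain ⟨a, ha⟩ := exists_sum_starCombination_le hc0 hc1 G
  refine ⟨a, ?_⟩
  have hcard : (#H : ℝ) ≤ #(G ∩ F) := by
    exact_mod_cast card_le_card (subset_inter hHG hHF)
  have hsum := hFmax.1.two_mul_card_inter_sub_card_le_sum_famVec G
  rw [hdecomp] at hsum
  simp only [Pi.add_apply, sum_add_distrib] at hsum
  have hedges := hG.sum_edgeCombination_nonpos hlam
  have : (#H : ℝ) ≤ #(starFam a G) := by linarith
  exact_mod_cast this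

/-- Kleitman's conjecture (for ground set size `m`) implies Chvátal's conjecture:
if every maximal intersecting subfamily of `P([m])` admits the conical decomposition into
star vectors and edge vectors, then for every subset-closed family `G` and every intersecting
subfamily `H ⊆ G`, some star of `G` is at least as large as `H`. -/
theorem kleitman_implies_chvatal (m : ℕ) (hm : 1 ≤ m)
    (hKleitman : ∀ F : Finset (Finset (Fin m)), IsMaxIntersecting F →
      ∃ (c : Fin m → ℝ) (lam : Finset (Fin m) → Finset (Fin m) → ℝ),
        (∀ a, 0 ≤ c a) ∧ (∑ a, c a = 1) ∧
        (∀ A B : Finset (Fin m), A ⊆ B → 0 ≤ lam A B) ∧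
        famVec F = (∑ a, c a • famVec (starFam a Finset.univ)) +
          ∑ B : Finset (Fin m), ∑ A ∈ B.powerset, lam A B • (stdBasis B - stdBasis A)) :
    ∀ G : Finset (Finset (Fin m)), IsSubsetClosed G →
      ∀ H ⊆ G, IsIntersecting H → ∃ a : Fin m, H.card ≤ (starFam a G).card :=
  kleitman_implies_chvatal_general m hKleitman
end

section
/- Fix m ≥ 1. If σ is a permutation of [m], F ⊆ P([m]) is subset-closed, and 0 ≤ k ≤ m, then the partial compositions along the sequences α∘σ and β∘σ produce the same family: S^k_{α∘σ}(F) = S^k_{β∘σ}(F). -/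
open Finset

variable {m : ℕ}

/-- Partial composition of a (0-indexed) sequence of shift operators:
`Scomp s 0 H A = A` and `Scomp s (i+1) H A = s i (Scomp s i H '' H) (Scomp s i H A)`. -/
def Scomp (s : ℕ → Finset (Finset (Fin m)) → Finset (Fin m) → Finset (Fin m)) :
    ℕ → Finset (Finset (Fin m)) → Finset (Fin m) → Finset (Fin m)
  | 0, _, A => A
  | i + 1, H, A => s i (H.image (Scomp s i H)) (Scomp s i H A)

/-- The image family `S^i(H)` under the partial composition. -/
def SFam (s : ℕ → Finset (Finset (Fin m)) → Finset (Fin m) → Finset (Fin m))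
    (i : ℕ) (H : Finset (Finset (Fin m))) : Finset (Finset (Fin m)) :=
  H.image (Scomp s i H)

/-- The sequence of shift operators `α ∘ σ`, where `α_a(H, A) = A △ {a}`. -/
def alphaSeq (σ : Equiv.Perm (Fin m)) :
    ℕ → Finset (Finset (Fin m)) → Finset (Fin m) → Finset (Fin m) :=
  fun i _ A => if h : i < m then symmDiff A {σ ⟨i, h⟩} else A

/-- The sequence of shift operators `β ∘ σ`, where `β_a(H, A) = A ∪ {a}` if `A ∪ {a} ∉ H`
and `β_a(H, A) = A` otherwise. -/
def betaSeq (σ : Equiv.Perm (Fin m)) :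
    ℕ → Finset (Finset (Fin m)) → Finset (Fin m) → Finset (Fin m) :=
  fun i H A =>
    if h : i < m then (if insert (σ ⟨i, h⟩) A ∈ H then A else insert (σ ⟨i, h⟩) A) else A

/-- A family is closed under erasing `a`. -/
def AClosed (a : Fin m) (G : Finset (Finset (Fin m))) : Prop :=
  ∀ A ∈ G, A.erase a ∈ G

lemma symmDiff_singleton' (A : Finset (Fin m)) (a : Fin m) :
    symmDiff A {a} = if a ∈ A then A.erase a else insert a A := by
  by_cases h : a ∈ A <;> ext x <;>
    simp only [Finset.mem_symmDiff, Finset.mem_singleton, h, if_true, if_false,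
      Finset.mem_erase, Finset.mem_insert] <;>
  constructor <;> intro hx
  · rcases hx with ⟨hxA, hxa⟩ | ⟨rfl, hxA⟩
    · exact ⟨hxa, hxA⟩
    · exact absurd h hxA
  · exact Or.inl ⟨hx.2, hx.1⟩
  · rcases hx with ⟨hxA, _⟩ | ⟨rfl, _⟩
    · exact Or.inr hxA
    · exact Or.inl rfl
  · rcases hx with rfl | hxA
    · exact Or.inr ⟨rfl, h⟩
    · exact Or.inl ⟨hxA, fun he => h (he ▸ hxA)⟩

lemma image_alpha_eq_beta (a : Fin m) (G : Finset (Finset (Fin m))) (hG : AClosed a G) :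
    G.image (fun A => symmDiff A {a}) =
      G.image (fun A => if insert a A ∈ G then A else insert a A) := by
  apply Finset.Subset.antisymm
  · intro B hB
    simp only [Finset.mem_image] at hB ⊢
    obtain ⟨A, hA, rfl⟩ := hB
    rw [symmDiff_singleton']
    by_cases h : a ∈ A
    · simp only [h, if_true]
      refine ⟨A.erase a, hG A hA, ?_⟩
      rw [Finset.insert_erase h, if_pos hA]
    · simp only [h, if_false]
      by_cases h2 : insert a A ∈ G
      · exact ⟨insert a A, h2, by rw [Finset.insert_idem, if_pos h2]⟩
      · exact ⟨A, hA, by rw [if_neg h2]⟩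
  · intro B hB
    simp only [Finset.mem_image] at hB ⊢
    obtain ⟨A, hA, rfl⟩ := hB
    by_cases h2 : insert a A ∈ G
    · rw [if_pos h2]
      by_cases h : a ∈ A
      · refine ⟨A.erase a, hG A hA, ?_⟩
        rw [symmDiff_singleton', if_neg (Finset.notMem_erase a A), Finset.insert_erase h]
      · refine ⟨insert a A, h2, ?_⟩
        rw [symmDiff_singleton', if_pos (Finset.mem_insert_self a A), Finset.erase_insert h]
    · rw [if_neg h2]
      have h : a ∉ A := fun h => h2 (by rwa [Finset.insert_eq_self.mpr h])
      exact ⟨A, hA, by rw [symmDiff_singleton', if_neg h]⟩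

lemma aclosed_beta (a b : Fin m) (hab : a ≠ b) (G : Finset (Finset (Fin m)))
    (hb : AClosed b G) :
    AClosed b (G.image (fun A => if insert a A ∈ G then A else insert a A)) := by
  intro B hB
  simp only [Finset.mem_image] at hB ⊢
  obtain ⟨A, hA, rfl⟩ := hB
  by_cases h2 : insert a A ∈ G
  · rw [if_pos h2]
    refine ⟨A.erase b, hb A hA, ?_⟩
    have h3 : insert a (A.erase b) ∈ G := by
      have := hb _ h2
      rwa [Finset.erase_insert_of_ne hab] at this
    rw [if_pos h3]
  · rw [if_neg h2, Finset.erase_insert_of_ne hab]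
    by_cases h3 : insert a (A.erase b) ∈ G
    · exact ⟨insert a (A.erase b), h3, by rw [Finset.insert_idem, if_pos h3]⟩
    · exact ⟨A.erase b, hb A hA, by rw [if_neg h3]⟩

lemma SFam_zero (s : ℕ → Finset (Finset (Fin m)) → Finset (Fin m) → Finset (Fin m))
    (H : Finset (Finset (Fin m))) : SFam s 0 H = H := by
  simp [SFam, Scomp]

lemma SFam_succ (s : ℕ → Finset (Finset (Fin m)) → Finset (Fin m) → Finset (Fin m))
    (k : ℕ) (H : Finset (Finset (Fin m))) :
    SFam s (k + 1) H = (SFam s k H).image (s k (SFam s k H)) := by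
  simp only [SFam, Finset.image_image]
  rfl

/-- For a subset-closed family, the partial compositions along `α ∘ σ` and `β ∘ σ`
produce the same family. -/
theorem alpha_beta_equivalence (m : ℕ) (hm : 1 ≤ m) (σ : Equiv.Perm (Fin m))
    (F : Finset (Finset (Fin m))) (hF : IsSubsetClosed F) (k : ℕ) (hk : k ≤ m) :
    SFam (alphaSeq σ) k F = SFam (betaSeq σ) k F := by
  have key : ∀ k, k ≤ m → SFam (alphaSeq σ) k F = SFam (betaSeq σ) k F ∧
      ∀ j (hj : j < m), k ≤ j → AClosed (σ ⟨j, hj⟩) (SFam (betaSeq σ) k F) := by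
    intro k
    induction k with
    | zero =>
      intro _
      refine ⟨by rw [SFam_zero, SFam_zero], ?_⟩
      intro j hj _
      intro A hA
      rw [SFam_zero] at hA ⊢
      exact hF A hA _ (Finset.erase_subset _ _)
    | succ k ih =>
      intro hk1
      obtain ⟨heq, hcl⟩ := ih (Nat.le_of_succ_le hk1)
      have hkm : k < m := hk1
      have hbeta : SFam (betaSeq σ) (k + 1) F =
          (SFam (betaSeq σ) k F).image
            (fun A => if insert (σ ⟨k, hkm⟩) A ∈ SFam (betaSeq σ) k F then A
              else insert (σ ⟨k, hkm⟩) A) := by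
        rw [SFam_succ]
        congr 1
        funext A
        simp only [betaSeq, dif_pos hkm]
      have halpha : SFam (alphaSeq σ) (k + 1) F =
          (SFam (betaSeq σ) k F).image (fun A => symmDiff A {σ ⟨k, hkm⟩}) := by
        rw [SFam_succ, heq]
        congr 1
        funext A
        simp only [alphaSeq, dif_pos hkm]
      constructor
      · rw [halpha, hbeta]
        exact image_alpha_eq_beta _ _ (hcl k hkm le_rfl)
      · intro j hj hjk
        rw [hbeta]
        have hne : σ ⟨k, hkm⟩ ≠ σ ⟨j, hj⟩ := by
          intro h
          have := σ.injective h
          have : k = j := by simpa using congrArg Fin.val this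
          omega
        exact aclosed_beta _ _ hne _ (hcl j hj (Nat.le_of_succ_le hjk))
  exact (key k hk).1
end

section
/- Fix m ≥ 1. Let F ⊆ P([m]), a ∈ [m], and A ⊆ [m]\{a}. Then Λ(F)_{(A, A∪{a})} = Σ_{B ∈ (F/{a})^{−1}({∅})} |A △ B|! · (m − 1 − |A △ B|)! − Σ_{B ∈ (F/{a})^{−1}({{a}})} |A △ B|! · (m − 1 − |A △ B|)!. -/
/-
The `k`-th step of the path of `(σ, C)` goes from `A` to `A ∪ {a}` exactly when `σ(k) = a` and
`{σ(1), …, σ(k-1)} = C △ A`, and it goes backwards exactly when `σ(k) = a` and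
`{σ(1), …, σ(k-1)} = C △ (A ∪ {a})`. For a set `S`, the pairs `(σ, k)` with `σ(k) = a` and
`σ({1, …, k-1}) = S` force `k = |S| + 1`; there are none if `a ∈ S`, and otherwise there are
`|S|! · (m - 1 - |S|)!` of them, one for each way of permuting `S` and its complement in
`[m] \ {a}`. Hence `C` contributes forwards iff `a ∉ C` and backwards iff `a ∈ C`, in both cases
with the weight of `B = C \ {a}`, and pairing `B` with `B ∪ {a}` leaves exactly the two fibres
of `F/{a}`.
-/

open Finset

variable {m : ℕ}

/-- `Tpath σ C k = C △ {σ(1), …, σ(k)}` (0-indexed: the images of the first `k` indices). -/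
def Tpath (σ : Equiv.Perm (Fin m)) (C : Finset (Fin m)) (k : ℕ) : Finset (Fin m) :=
  symmDiff C ((Finset.univ.filter fun i : Fin m => (i : ℕ) < k).image σ)

/-- The path-sum `Λ(H)` as a vector in `ℝ^{P([m]) × P([m])}`: at coordinate `(X, Y)` it is the
number of triples `(σ, C, k)` whose `k`-th path step goes from `X` to `Y`, minus the number of
triples whose `k`-th step goes from `Y` to `X`. -/
def LamW (H : Finset (Finset (Fin m))) (X Y : Finset (Fin m)) : ℝ :=
  ∑ σ : Equiv.Perm (Fin m), ∑ C ∈ H, ∑ k ∈ Finset.Icc 1 m,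
    ((if Tpath σ C (k - 1) = X ∧ Tpath σ C k = Y then (1 : ℝ) else 0)
      - (if Tpath σ C (k - 1) = Y ∧ Tpath σ C k = X then (1 : ℝ) else 0))

/-- A maximal intersecting family `F` is `∅`-minimal if for every `a`, the coordinate
`Λ(F*)_{(∅,{a})}` is the minimum of `Λ(F*)_{(A, A ∪ {a})}` over all `A ⊆ [m] \ {a}`. -/
def EmptyMinimal (F : Finset (Finset (Fin m))) : Prop :=
  ∀ a : Fin m, ∀ A : Finset (Fin m), a ∉ A →
    LamW (dualFam F) ∅ {a} ≤ LamW (dualFam F) A (insert a A)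

/-- `(F/{a})⁻¹({∅}) = {B ⊆ [m] \ {a} : B ∈ F ∧ B ∪ {a} ∉ F}`. -/
def preEmpty (F : Finset (Finset (Fin m))) (a : Fin m) : Finset (Finset (Fin m)) :=
  Finset.univ.filter fun B => a ∉ B ∧ B ∈ F ∧ insert a B ∉ F

/-- `(F/{a})⁻¹({{a}}) = {B ⊆ [m] \ {a} : B ∉ F ∧ B ∪ {a} ∈ F}`. -/
def preSingleton (F : Finset (Finset (Fin m))) (a : Fin m) : Finset (Finset (Fin m)) :=
  Finset.univ.filter fun B => a ∉ B ∧ B ∉ F ∧ insert a B ∈ F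

section PermCount

open Equiv Nat

variable {α : Type*} [DecidableEq α]

def memPair (s : Finset α) (x₀ x : α) : Bool × Bool := (decide (x ∈ s), decide (x = x₀))

theorem perm_apply_eq_and_image_eq_iff (σ : Perm α) (D S : Finset α) (j a : α) :
    σ j = a ∧ D.image σ = S ↔ memPair S a ∘ σ = memPair D j := by
  have hpoint : σ j = a ↔ ∀ x, σ x = a ↔ x = j := by
    refine ⟨fun h x => ?_, fun h => (h j).2 rfl⟩
    rw [← h, σ.injective.eq_iff]
  have himage : D.image σ = S ↔ ∀ x, σ x ∈ S ↔ x ∈ D := by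
    refine ⟨fun h x => ?_, fun h => ?_⟩
    · rw [← h, σ.injective.mem_finset_image]
    · ext y
      rw [← σ.apply_symm_apply y, σ.injective.mem_finset_image, h]
  simp only [hpoint, himage, funext_iff, Function.comp_apply, memPair, Prod.mk.injEq,
    decide_eq_decide, ← forall_and, and_comm]

variable [Fintype α]

theorem card_perm_comp_eq_of_card_fiber_eq {ι : Type*} [Fintype ι] [DecidableEq ι]
    (p q : α → ι) (h : ∀ i, Fintype.card {x // p x = i} = Fintype.card {x // q x = i}) :
    Fintype.card {σ : Perm α // q ∘ σ = p} = ∏ i, (Fintype.card {x // q x = i})! := by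
  -- The solutions form a coset of the stabilizer of `q`, translated by a fiberwise bijection.
  let τ : Perm α := ofFiberEquiv fun i => Fintype.equivOfCardEq (h i)
  have hτ : q ∘ τ = p := funext (ofFiberEquiv_map _)
  rw [← DomMulAct.stabilizer_card q]
  refine Fintype.card_congr ((Equiv.mulRight τ⁻¹).subtypeEquiv fun σ => ?_)
  rw [Equiv.coe_mulRight, Perm.coe_mul, ← Function.comp_assoc, Perm.inv_def, comp_symm_eq, hτ]

theorem card_fiber_memPair {s : Finset α} {x₀ : α} (hx₀ : x₀ ∉ s) (b c : Bool) :
    Fintype.card {x // memPair s x₀ x = (b, c)} =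
      if c then (if b then 0 else 1) else (if b then #s else Fintype.card α - 1 - #s) := by
  rw [Fintype.card_subtype]
  cases b <;> cases c <;> simp only [memPair, Prod.mk.injEq, decide_eq_true_iff,
    decide_eq_false_iff_not, Bool.false_eq_true, if_true, if_false]
  · have hcompl : ({x | x ∉ s ∧ x ≠ x₀} : Finset α) = (insert x₀ s)ᶜ := by ext; simp [and_comm]
    rw [hcompl, card_compl, card_insert_of_notMem hx₀]
    omega
  · rw [show ({x | x ∉ s ∧ x = x₀} : Finset α) = {x₀} by ext; aesop, card_singleton]
  · rw [show ({x | x ∈ s ∧ x ≠ x₀} : Finset α) = s by ext; aesop]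
  · simpa using hx₀

theorem card_perm_apply_eq_and_image_eq {D S : Finset α} {j a : α} (hj : j ∉ D) (ha : a ∉ S)
    (hDS : #D = #S) :
    Fintype.card {σ : Perm α // σ j = a ∧ D.image σ = S}
      = (#S)! * (Fintype.card α - 1 - #S)! := by
  have hfibers : ∀ i,
      Fintype.card {x // memPair D j x = i} = Fintype.card {x // memPair S a x = i} := by
    rintro ⟨b, c⟩
    rw [card_fiber_memPair hj, card_fiber_memPair ha, hDS]
  rw [Fintype.card_congr
      (Equiv.subtypeEquivRight fun σ => perm_apply_eq_and_image_eq_iff σ D S j a),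
    card_perm_comp_eq_of_card_fiber_eq _ _ hfibers, Fintype.prod_prod_type]
  simp [card_fiber_memPair ha]

end PermCount

theorem insert_eq_symmDiff_singleton {α : Type*} [DecidableEq α] {s : Finset α} {a : α}
    (h : a ∉ s) :
    insert a s = symmDiff s {a} := by
  rw [(disjoint_singleton_right.2 h).symmDiff_eq_sup, sup_eq_union, union_comm, insert_eq]

theorem symmDiff_eq_iff_eq_symmDiff {β : Type*} [GeneralizedBooleanAlgebra β] {x y z : β} :
    symmDiff x y = z ↔ y = symmDiff x z := by
  rw [← symmDiff_right_inj (a := x), symmDiff_symmDiff_cancel_left]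

theorem sum_card_perm_apply_eq_and_image_Iio_eq (a : Fin m) (S : Finset (Fin m)) :
    ∑ j : Fin m, Fintype.card {σ : Equiv.Perm (Fin m) // σ j = a ∧ (Iio j).image σ = S}
      = if a ∈ S then 0 else (#S).factorial * (m - 1 - #S).factorial := by
  split_ifs with ha
  · refine sum_eq_zero fun j _ => Fintype.card_eq_zero_iff.2 ⟨fun ⟨σ, hja, himage⟩ => ?_⟩
    rw [← himage, ← hja, σ.injective.mem_finset_image] at ha
    exact notMem_Iio_self ha
  · have hS : #S < m := by simpa using card_lt_univ_of_notMem ha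
    -- Only the position `j = #S` can carry the step, as `#((Iio j).image σ) = j`.
    have hzero : ∀ j : Fin m, j ≠ ⟨#S, hS⟩ →
        Fintype.card {σ : Equiv.Perm (Fin m) // σ j = a ∧ (Iio j).image σ = S} = 0 := by
      refine fun j hj => Fintype.card_eq_zero_iff.2 ⟨fun ⟨σ, _, himage⟩ => hj ?_⟩
      simp [← himage, card_image_of_injective _ σ.injective]
    rw [sum_eq_single ⟨#S, hS⟩ (fun j _ => hzero j) (by simp),
      card_perm_apply_eq_and_image_eq notMem_Iio_self ha (by simp), Fintype.card_fin]

theorem tpath_coe (σ : Equiv.Perm (Fin m)) (C : Finset (Fin m)) (j : Fin m) :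
    Tpath σ C j = symmDiff C ((Iio j).image σ) := by
  rw [Tpath]; congr 2; ext; simp only [mem_filter, mem_univ, true_and, mem_Iio, Fin.lt_def]

theorem tpath_coe_add_one (σ : Equiv.Perm (Fin m)) (C : Finset (Fin m)) (j : Fin m) :
    Tpath σ C ((j : ℕ) + 1) = symmDiff (Tpath σ C j) {σ j} := by
  have hIic : (univ.filter fun i : Fin m => (i : ℕ) < (j : ℕ) + 1) = insert j (Iio j) := by
    rw [Iio_insert]; ext
    simp only [mem_filter, mem_univ, true_and, mem_Iic, Fin.le_def, Nat.lt_succ_iff]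
  have hσj : σ j ∉ (Iio j).image σ := by
    rw [σ.injective.mem_finset_image]; exact notMem_Iio_self
  rw [Tpath, hIic, image_insert, insert_eq_symmDiff_singleton hσj, tpath_coe, symmDiff_assoc]

theorem tpath_step_iff (σ : Equiv.Perm (Fin m)) (C X Y : Finset (Fin m)) (j : Fin m) :
    Tpath σ C j = X ∧ Tpath σ C ((j : ℕ) + 1) = Y
      ↔ (Iio j).image σ = symmDiff C X ∧ {σ j} = symmDiff X Y := by
  have hX : Tpath σ C j = X ↔ (Iio j).image σ = symmDiff C X := by
    rw [tpath_coe, symmDiff_eq_iff_eq_symmDiff]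
  rw [tpath_coe_add_one, ← hX]
  exact and_congr_right fun h => h ▸ symmDiff_eq_iff_eq_symmDiff

def stepCount (H : Finset (Finset (Fin m))) (X Y : Finset (Fin m)) : ℝ :=
  ∑ σ : Equiv.Perm (Fin m), ∑ C ∈ H, ∑ j : Fin m,
    if Tpath σ C j = X ∧ Tpath σ C ((j : ℕ) + 1) = Y then (1 : ℝ) else 0

theorem lamW_eq_stepCount_sub (H : Finset (Finset (Fin m))) (X Y : Finset (Fin m)) :
    LamW H X Y = stepCount H X Y - stepCount H Y X := by
  simp only [LamW, stepCount, ← sum_sub_distrib]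
  refine sum_congr rfl fun σ _ => sum_congr rfl fun C _ => ?_
  rw [← Ico_add_one_right_eq_Icc, sum_Ico_eq_sum_range, ← Fin.sum_univ_eq_sum_range]
  simp only [add_comm 1, Nat.add_sub_cancel]
  rfl

theorem stepCount_of_symmDiff_eq_singleton {X Y : Finset (Fin m)} {a : Fin m}
    (hXY : symmDiff X Y = {a}) (H : Finset (Finset (Fin m))) :
    stepCount H X Y = ∑ C ∈ H, ((if a ∈ symmDiff C X then 0 else
      (symmDiff C X).card.factorial * (m - 1 - (symmDiff C X).card).factorial : ℕ) : ℝ) := by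
  rw [stepCount, sum_comm]
  refine sum_congr rfl fun C _ => ?_
  rw [sum_comm, ← sum_card_perm_apply_eq_and_image_Iio_eq, Nat.cast_sum]
  refine sum_congr rfl fun j _ => ?_
  simp only [tpath_step_iff, hXY, singleton_inj, sum_boole, Fintype.card_subtype,
    and_comm (a := (Iio j).image _ = _)]

theorem preEmpty_eq_filter_powerset (F : Finset (Finset (Fin m))) (a : Fin m) :
    preEmpty F a = {B ∈ (univ.erase a).powerset | B ∈ F ∧ insert a B ∉ F} := by
  ext B; simp [preEmpty, subset_erase]

theorem preSingleton_eq_filter_powerset (F : Finset (Finset (Fin m))) (a : Fin m) :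
    preSingleton F a = {B ∈ (univ.erase a).powerset | B ∉ F ∧ insert a B ∈ F} := by
  ext B; simp [preSingleton, subset_erase]

theorem lam_formula_general (m : ℕ) (F : Finset (Finset (Fin m))) (a : Fin m)
    (A : Finset (Fin m)) (hA : a ∉ A) :
    LamW F A (insert a A)
      = (∑ B ∈ preEmpty F a,
            ((symmDiff A B).card.factorial * (m - 1 - (symmDiff A B).card).factorial : ℝ))
        - ∑ B ∈ preSingleton F a,
            ((symmDiff A B).card.factorial * (m - 1 - (symmDiff A B).card).factorial : ℝ) := by
  have hstep : symmDiff A (insert a A) = {a} := by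
    rw [insert_eq_symmDiff_singleton hA, symmDiff_symmDiff_cancel_left]
  have huniv : (univ : Finset (Finset (Fin m))) = (insert a (univ.erase a)).powerset := by
    rw [insert_erase (mem_univ a), powerset_univ]
  rw [lamW_eq_stepCount_sub, stepCount_of_symmDiff_eq_singleton hstep,
    stepCount_of_symmDiff_eq_singleton (symmDiff_comm A _ ▸ hstep), ← sum_sub_distrib,
    ← sum_ite_mem_eq F, huniv, sum_powerset_insert (notMem_erase a univ),
    ← sum_add_distrib, preEmpty_eq_filter_powerset, preSingleton_eq_filter_powerset, sum_filter,
    sum_filter, ← sum_sub_distrib]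
  refine sum_congr rfl fun B hB => ?_
  have haB : a ∉ B := fun h => notMem_erase a univ (mem_powerset.1 hB h)
  have hinsert : symmDiff (insert a B) (insert a A) = symmDiff A B := by
    rw [insert_eq_symmDiff_singleton hA, insert_eq_symmDiff_singleton haB,
      symmDiff_symmDiff_symmDiff_comm, symmDiff_self, symmDiff_bot, symmDiff_comm]
  by_cases hBF : B ∈ F <;> by_cases haBF : insert a B ∈ F <;>
    simp [hinsert, mem_symmDiff, haB, hA, symmDiff_comm B A, hBF, haBF]

/-- Formula for the coordinate `Λ(F)_{(A, A ∪ {a})}` in terms of the fibers of `F/{a}`. -/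
theorem lam_formula (m : ℕ) (hm : 1 ≤ m) (F : Finset (Finset (Fin m))) (a : Fin m)
    (A : Finset (Fin m)) (hA : a ∉ A) :
    LamW F A (insert a A)
      = (∑ B ∈ preEmpty F a,
            ((symmDiff A B).card.factorial * (m - 1 - (symmDiff A B).card).factorial : ℝ))
        - ∑ B ∈ preSingleton F a,
            ((symmDiff A B).card.factorial * (m - 1 - (symmDiff A B).card).factorial : ℝ) :=
  lam_formula_general m F a A hA
end

section
/- Fix m ≥ 1. If F ⊆ P([m]) is subset-closed, a ∈ [m], and A ⊆ [m]\{a}, then Λ(F)_{(A, A∪{a})} = Σ_{B ∈ (F/{a})^{−1}({∅})} |A △ B|! · (m − 1 − |A △ B|)!; in particular Λ(F)_{(A, A∪{a})} ≥ 0. -/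
open Finset

variable {m : ℕ}

variable {m : ℕ}

def initImage (σ : Equiv.Perm (Fin m)) (k : ℕ) : Finset (Fin m) :=
  (Finset.univ.filter fun i : Fin m => (i : ℕ) < k).image σ

lemma filter_lt_card {k : ℕ} (h : k ≤ m) :
    ((Finset.univ : Finset (Fin m)).filter fun i : Fin m => (i : ℕ) < k).card = k := by
  have he : ((Finset.univ : Finset (Fin m)).filter fun i : Fin m => (i : ℕ) < k)
      = (Finset.range k).attachFin (fun n hn => lt_of_lt_of_le (Finset.mem_range.mp hn) h) := by
    ext i; simp [Finset.mem_attachFin]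
  rw [he, Finset.card_attachFin, Finset.card_range]

lemma initImage_card (σ : Equiv.Perm (Fin m)) {k : ℕ} (h : k ≤ m) :
    (initImage σ k).card = k := by
  rw [initImage, Finset.card_image_of_injective _ σ.injective, filter_lt_card h]

lemma initImage_succ (σ : Equiv.Perm (Fin m)) {k : ℕ} (hk : k < m) :
    initImage σ (k + 1) = insert (σ ⟨k, hk⟩) (initImage σ k) := by
  have hf : (Finset.univ.filter fun i : Fin m => (i : ℕ) < k + 1)
      = insert (⟨k, hk⟩ : Fin m) (Finset.univ.filter fun i : Fin m => (i : ℕ) < k) := by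
    ext i
    simp only [Finset.mem_insert, Finset.mem_filter, Finset.mem_univ, true_and]
    constructor
    · intro hi
      rcases Nat.lt_succ_iff_lt_or_eq.mp hi with h | h
      · exact Or.inr h
      · exact Or.inl (Fin.ext h)
    · rintro (rfl | h)
      · exact Nat.lt_succ_self k
      · exact Nat.lt_succ_of_lt h
  rw [initImage, initImage, hf, Finset.image_insert]

lemma initImage_not_mem (σ : Equiv.Perm (Fin m)) {k : ℕ} (hk : k < m) :
    σ ⟨k, hk⟩ ∉ initImage σ k := by
  intro h
  obtain ⟨i, hi, hEq⟩ := Finset.mem_image.mp h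
  rw [Finset.mem_filter] at hi
  have : i = ⟨k, hk⟩ := σ.injective hEq
  rw [this] at hi
  exact lt_irrefl k hi.2

lemma insert_eq_symmDiff' {α : Type*} [DecidableEq α] {a : α} {s : Finset α} (h : a ∉ s) :
    insert a s = symmDiff s {a} := by
  ext x
  simp only [symmDiff, Finset.mem_insert, Finset.sup_eq_union, Finset.mem_union,
    Finset.mem_sdiff, Finset.mem_singleton]
  constructor
  · rintro (rfl | hx)
    · exact Or.inr ⟨rfl, h⟩
    · exact Or.inl ⟨hx, fun hh => h (hh ▸ hx)⟩
  · rintro (⟨hx, _⟩ | ⟨rfl, _⟩)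
    · exact Or.inr hx
    · exact Or.inl rfl

lemma eq_symmDiff_self_iff {α : Type*} [DecidableEq α] {u x : Finset α} :
    u = symmDiff u x ↔ x = ⊥ := by
  constructor
  · intro h
    have h2 := symmDiff_symmDiff_cancel_left u x
    rw [← h, symmDiff_self] at h2
    exact h2.symm
  · rintro rfl
    rw [symmDiff_bot]

lemma insert_eq_insert_iff' {α : Type*} [DecidableEq α] {a c : α} {s : Finset α} (hc : c ∉ s) :
    insert a s = insert c s ↔ a = c := by
  constructor
  · intro h
    have : c ∈ insert a s := h ▸ Finset.mem_insert_self c s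
    rcases Finset.mem_insert.mp this with h' | h'
    · exact h'.symm
    · exact absurd h' hc
  · rintro rfl; rfl

lemma symmDiff_eq_comm' {α : Type*} [DecidableEq α] {C S X : Finset α} :
    symmDiff C S = X ↔ C = symmDiff X S := by
  constructor
  · rintro rfl
    rw [symmDiff_symmDiff_cancel_right]
  · rintro rfl
    rw [symmDiff_symmDiff_cancel_right]

lemma card_subtype_lt' {s : ℕ} (h : s ≤ m) :
    Fintype.card {i : Fin m // (i : ℕ) < s} = s := by
  rw [Fintype.card_subtype]
  exact filter_lt_card h

lemma card_subtype_not_lt' {s : ℕ} (h : s ≤ m) :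
    Fintype.card {i : Fin m // ¬ ((i : ℕ) < s)} = m - s := by
  rw [Fintype.card_subtype_compl, Fintype.card_fin, card_subtype_lt' h]

lemma card_subtype_mem' (S : Finset (Fin m)) :
    Fintype.card {x : Fin m // x ∈ S} = S.card := Fintype.card_coe S

lemma card_subtype_not_mem' (S : Finset (Fin m)) :
    Fintype.card {x : Fin m // x ∉ S} = m - S.card := by
  rw [Fintype.card_subtype_compl, Fintype.card_fin, Fintype.card_coe]

lemma aux_mem {S : Finset (Fin m)} {σ : Equiv.Perm (Fin m)} (h2 : initImage σ S.card = S)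
    {i : Fin m} (hi : (i : ℕ) < S.card) : σ i ∈ S := by
  rw [← h2]
  exact Finset.mem_image_of_mem σ (Finset.mem_filter.mpr ⟨Finset.mem_univ _, hi⟩)

lemma aux_not_mem {a : Fin m} {S : Finset (Fin m)} {σ : Equiv.Perm (Fin m)} {hs : S.card < m}
    (h1 : σ ⟨S.card, hs⟩ = a) (h2 : initImage σ S.card = S)
    {i : Fin m} (hi : ¬ ((i : ℕ) < S.card + 1)) : σ i ∉ insert a S := by
  intro hmem
  rcases Finset.mem_insert.mp hmem with h | h
  · rw [← h1] at h
    have h3 : i = ⟨S.card, hs⟩ := σ.injective h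
    rw [h3] at hi
    exact hi (Nat.lt_succ_self _)
  · rw [← h2] at h
    obtain ⟨j, hj, hEq⟩ := Finset.mem_image.mp h
    rw [Finset.mem_filter] at hj
    have hij : j = i := σ.injective hEq
    rw [hij] at hj
    exact hi (Nat.lt_succ_of_lt hj.2)

/-- glue a bijection on positions `< s` with one on positions `> s`, sending position `s` to
`a`. -/
def glue (a : Fin m) (S : Finset (Fin m))
    (f : {i : Fin m // (i : ℕ) < S.card} ≃ {x : Fin m // x ∈ S})
    (g : {i : Fin m // ¬ ((i : ℕ) < S.card + 1)} ≃ {x : Fin m // x ∉ insert a S}) :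
    Fin m → Fin m :=
  fun i => if h : (i : ℕ) < S.card then (f ⟨i, h⟩ : Fin m)
    else if h2 : (i : ℕ) < S.card + 1 then a else (g ⟨i, h2⟩ : Fin m)

lemma glue_injective (a : Fin m) (S : Finset (Fin m)) (ha : a ∉ S)
    (f : {i : Fin m // (i : ℕ) < S.card} ≃ {x : Fin m // x ∈ S})
    (g : {i : Fin m // ¬ ((i : ℕ) < S.card + 1)} ≃ {x : Fin m // x ∉ insert a S}) :
    Function.Injective (glue a S f g) := by
  intro i j hij
  unfold glue at hij
  by_cases h1 : (i:ℕ) < S.card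
  · rw [dif_pos h1] at hij
    by_cases h3 : (j:ℕ) < S.card
    · rw [dif_pos h3] at hij
      exact congrArg Subtype.val (f.injective (Subtype.ext hij))
    · rw [dif_neg h3] at hij
      by_cases h4 : (j:ℕ) < S.card + 1
      · rw [dif_pos h4] at hij
        exact absurd (hij ▸ (f ⟨i, h1⟩).2) ha
      · rw [dif_neg h4] at hij
        exact absurd (Finset.mem_insert_of_mem (hij ▸ (f ⟨i, h1⟩).2)) (g ⟨j, h4⟩).2
  · rw [dif_neg h1] at hij
    by_cases h2 : (i:ℕ) < S.card + 1
    · rw [dif_pos h2] at hij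
      by_cases h3 : (j:ℕ) < S.card
      · rw [dif_pos h3] at hij
        exact absurd (hij.symm ▸ (f ⟨j, h3⟩).2) ha
      · rw [dif_neg h3] at hij
        by_cases h4 : (j:ℕ) < S.card + 1
        · rw [dif_pos h4] at hij
          exact Fin.ext (by omega)
        · rw [dif_neg h4] at hij
          exact absurd (hij ▸ Finset.mem_insert_self a S) (g ⟨j, h4⟩).2
    · rw [dif_neg h2] at hij
      by_cases h3 : (j:ℕ) < S.card
      · rw [dif_pos h3] at hij
        exact absurd (Finset.mem_insert_of_mem (hij.symm ▸ (f ⟨j, h3⟩).2)) (g ⟨i, h2⟩).2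
      · rw [dif_neg h3] at hij
        by_cases h4 : (j:ℕ) < S.card + 1
        · rw [dif_pos h4] at hij
          exact absurd (hij.symm ▸ Finset.mem_insert_self a S) (g ⟨i, h2⟩).2
        · rw [dif_neg h4] at hij
          exact congrArg Subtype.val (g.injective (Subtype.ext hij))

/-- glue as a permutation. -/
noncomputable def gluePerm (a : Fin m) (S : Finset (Fin m)) (ha : a ∉ S)
    (f : {i : Fin m // (i : ℕ) < S.card} ≃ {x : Fin m // x ∈ S})
    (g : {i : Fin m // ¬ ((i : ℕ) < S.card + 1)} ≃ {x : Fin m // x ∉ insert a S}) :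
    Equiv.Perm (Fin m) :=
  Equiv.ofBijective (glue a S f g)
    (Finite.injective_iff_bijective.mp (glue_injective a S ha f g))

lemma gluePerm_apply (a : Fin m) (S : Finset (Fin m)) (ha : a ∉ S) (f) (g) (i : Fin m) :
    gluePerm a S ha f g i = glue a S f g i := rfl

lemma gluePerm_fix (a : Fin m) (S : Finset (Fin m)) (ha : a ∉ S) (hs : S.card < m) (f) (g) :
    gluePerm a S ha f g ⟨S.card, hs⟩ = a := by
  rw [gluePerm_apply]
  unfold glue
  rw [dif_neg (lt_irrefl S.card), dif_pos (Nat.lt_succ_self S.card)]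

lemma gluePerm_initImage (a : Fin m) (S : Finset (Fin m)) (ha : a ∉ S) (f) (g) :
    initImage (gluePerm a S ha f g) S.card = S := by
  ext x
  simp only [initImage, Finset.mem_image, Finset.mem_filter, Finset.mem_univ, true_and]
  constructor
  · rintro ⟨i, hi, rfl⟩
    rw [gluePerm_apply]
    unfold glue
    rw [dif_pos hi]
    exact (f ⟨i, hi⟩).2
  · intro hx
    refine ⟨(f.symm ⟨x, hx⟩ : Fin m), (f.symm ⟨x, hx⟩).2, ?_⟩
    rw [gluePerm_apply]
    unfold glue
    rw [dif_pos (f.symm ⟨x, hx⟩).2]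
    have h5 : (⟨(f.symm ⟨x, hx⟩ : Fin m), (f.symm ⟨x, hx⟩).2⟩
        : {i : Fin m // (i : ℕ) < S.card}) = f.symm ⟨x, hx⟩ := rfl
    rw [h5, Equiv.apply_symm_apply]

lemma count_perm (a : Fin m) (S : Finset (Fin m)) (ha : a ∉ S) (hs : S.card < m) :
    (∑ σ : Equiv.Perm (Fin m),
        if σ ⟨S.card, hs⟩ = a ∧ initImage σ S.card = S then (1:ℝ) else 0)
      = (S.card.factorial * (m - 1 - S.card).factorial : ℕ) := by
  classical
  rw [Finset.sum_boole]
  congr 1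
  rw [← Fintype.card_subtype]
  have e : {σ : Equiv.Perm (Fin m) // σ ⟨S.card, hs⟩ = a ∧ initImage σ S.card = S}
      ≃ ({i : Fin m // (i : ℕ) < S.card} ≃ {x : Fin m // x ∈ S})
        × ({i : Fin m // ¬ ((i : ℕ) < S.card + 1)} ≃ {x : Fin m // x ∉ insert a S}) := by
    refine
      { toFun := fun σp =>
          (Equiv.ofBijective (fun i => ⟨σp.1 i.1, aux_mem σp.2.2 i.2⟩)
            (by
              rw [Fintype.bijective_iff_injective_and_card]
              constructor
              · intro i j hij
                exact Subtype.ext (σp.1.injective (congrArg Subtype.val hij))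
              · rw [card_subtype_lt' hs.le, card_subtype_mem']),
          Equiv.ofBijective (fun i => ⟨σp.1 i.1, aux_not_mem σp.2.1 σp.2.2 i.2⟩)
            (by
              rw [Fintype.bijective_iff_injective_and_card]
              constructor
              · intro i j hij
                exact Subtype.ext (σp.1.injective (congrArg Subtype.val hij))
              · rw [card_subtype_not_lt' hs, card_subtype_not_mem',
                  Finset.card_insert_of_notMem ha]))
        invFun := fun fg =>
          ⟨gluePerm a S ha fg.1 fg.2,
            gluePerm_fix a S ha hs fg.1 fg.2, gluePerm_initImage a S ha fg.1 fg.2⟩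
        left_inv := ?_
        right_inv := ?_ }
    · rintro ⟨σ, hσ1, hσ2⟩
      apply Subtype.ext
      apply Equiv.ext
      intro i
      show glue a S _ _ i = σ i
      unfold glue
      by_cases h1 : (i:ℕ) < S.card
      · rw [dif_pos h1]
        rfl
      · rw [dif_neg h1]
        by_cases h2 : (i:ℕ) < S.card + 1
        · rw [dif_pos h2]
          have h3 : i = ⟨S.card, hs⟩ := Fin.ext (by show (i:ℕ) = S.card; omega)
          rw [h3, hσ1]
        · rw [dif_neg h2]
          rfl
    · rintro ⟨f, g⟩
      refine Prod.ext ?_ ?_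
      · apply Equiv.ext
        rintro ⟨i, hi⟩
        apply Subtype.ext
        show glue a S f g i = (f ⟨i, hi⟩ : Fin m)
        unfold glue
        rw [dif_pos hi]
      · apply Equiv.ext
        rintro ⟨i, hi⟩
        apply Subtype.ext
        show glue a S f g i = (g ⟨i, hi⟩ : Fin m)
        unfold glue
        rw [dif_neg (fun h => hi (Nat.lt_succ_of_lt h)), dif_neg hi]
  rw [Fintype.card_congr e, Fintype.card_prod,
    Fintype.card_equiv (Fintype.equivOfCardEq (by rw [card_subtype_lt' hs.le, card_subtype_mem'])),
    Fintype.card_equiv (Fintype.equivOfCardEq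
      (by rw [card_subtype_not_lt' hs, card_subtype_not_mem',
        Finset.card_insert_of_notMem ha])),
    card_subtype_lt' hs.le, card_subtype_not_lt' hs]
  have hms : m - (S.card + 1) = m - 1 - S.card := by omega
  rw [hms]

section StepA
variable {m : ℕ}
lemma sum_indicator_pair (F : Finset (Finset (Fin m))) (u v : Finset (Fin m)) :
    (∑ C ∈ F, if C = u ∧ C = v then (1:ℝ) else 0) = if u ∈ F ∧ u = v then 1 else 0 := by
  have h : ∀ C ∈ F, (if C = u ∧ C = v then (1:ℝ) else 0)
      = if C = u then (if u = v then (1:ℝ) else 0) else 0 := by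
    intro C _
    by_cases h1 : C = u
    · subst h1; simp
    · simp [h1]
  rw [Finset.sum_congr rfl h, Finset.sum_ite_eq' F u]
  by_cases h1 : u ∈ F <;> by_cases h2 : u = v <;> simp [h1, h2]

lemma mem_to_sum (P : Prop) [Decidable P] (G : Finset (Finset (Fin m))) (u : Finset (Fin m)) :
    (if P ∧ u ∈ G then (1:ℝ) else 0) = ∑ B ∈ G, if P ∧ u = B then (1:ℝ) else 0 := by
  have h : ∀ B ∈ G, (if P ∧ u = B then (1:ℝ) else 0)
      = if B = u then (if P then (1:ℝ) else 0) else 0 := by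
    intro B _
    have h1' : u = B ↔ B = u := eq_comm
    by_cases h1 : B = u <;> by_cases hP : P <;> simp [h1, hP, h1']
  rw [Finset.sum_congr rfl h, Finset.sum_ite_eq' G u]
  by_cases hP : P <;> by_cases hu : u ∈ G <;> simp [hP, hu]

lemma stepA (F : Finset (Finset (Fin m))) (hF : IsSubsetClosed F) (a : Fin m)
    (A : Finset (Fin m)) (hA : a ∉ A) (S' : Finset (Fin m)) (c : Fin m) (hc : c ∉ S') :
    (∑ C ∈ F,
      ((if symmDiff C S' = A ∧ symmDiff C (insert c S') = insert a A then (1:ℝ) else 0)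
        - (if symmDiff C S' = insert a A ∧ symmDiff C (insert c S') = A then (1:ℝ) else 0)))
    = if insert a S' = insert c S' ∧ symmDiff A S' ∈ preEmpty F a then 1 else 0 := by
  have hins : insert c S' = symmDiff S' {c} := insert_eq_symmDiff' hc
  -- rewrite indicators into `C = _ ∧ C = _` form
  have e1 : ∀ C, (symmDiff C S' = A ∧ symmDiff C (insert c S') = insert a A)
      ↔ (C = symmDiff A S' ∧ C = symmDiff (insert a A) (insert c S')) := by
    intro C
    rw [symmDiff_eq_comm', symmDiff_eq_comm']
  have e2 : ∀ C, (symmDiff C S' = insert a A ∧ symmDiff C (insert c S') = A)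
      ↔ (C = symmDiff (insert a A) S' ∧ C = symmDiff A (insert c S')) := by
    intro C
    rw [symmDiff_eq_comm', symmDiff_eq_comm']
  rw [Finset.sum_sub_distrib]
  have r1 : (∑ C ∈ F, if symmDiff C S' = A ∧ symmDiff C (insert c S') = insert a A
      then (1:ℝ) else 0)
      = if symmDiff A S' ∈ F ∧ symmDiff A S' = symmDiff (insert a A) (insert c S')
        then 1 else 0 := by
    rw [Finset.sum_congr rfl (fun C _ => by rw [if_congr (e1 C) rfl rfl]), sum_indicator_pair]
  have r2 : (∑ C ∈ F, if symmDiff C S' = insert a A ∧ symmDiff C (insert c S') = A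
      then (1:ℝ) else 0)
      = if symmDiff (insert a A) S' ∈ F ∧ symmDiff (insert a A) S' = symmDiff A (insert c S')
        then 1 else 0 := by
    rw [Finset.sum_congr rfl (fun C _ => by rw [if_congr (e2 C) rfl rfl]), sum_indicator_pair]
  rw [r1, r2]
  have hiff1 : symmDiff A S' = symmDiff (insert a A) (insert c S') ↔ a = c := by
    rw [insert_eq_symmDiff' hA, hins]
    have h3 : symmDiff (symmDiff A {a}) (symmDiff S' {c})
        = symmDiff (symmDiff A S') (symmDiff {a} {c}) := by
      rw [symmDiff_assoc, symmDiff_assoc, symmDiff_left_comm ({a} : Finset (Fin m)) S' {c}]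
    rw [h3, eq_symmDiff_self_iff, symmDiff_eq_bot, Finset.singleton_inj]
  have hiff2 : symmDiff (insert a A) S' = symmDiff A (insert c S') ↔ a = c := by
    rw [insert_eq_symmDiff' hA, symmDiff_right_comm, hins, ← symmDiff_assoc]
    constructor
    · intro h
      have h4 := symmDiff_symmDiff_cancel_left (symmDiff A S') ({a} : Finset (Fin m))
      rw [h, symmDiff_symmDiff_cancel_left] at h4
      exact (Finset.singleton_inj.mp h4).symm
    · rintro rfl; rfl
  by_cases hac : a = c
  · subst hac
    have ha1 : a ∉ symmDiff A S' := by
      simp [Finset.mem_symmDiff, hA, hc]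
    have hu2 : symmDiff (insert a A) S' = insert a (symmDiff A S') := by
      rw [insert_eq_symmDiff' hA, symmDiff_right_comm, ← insert_eq_symmDiff' ha1]
    rw [if_congr (and_iff_left (hiff1.mpr rfl)) rfl rfl,
        if_congr (and_iff_left (hiff2.mpr rfl)) rfl rfl,
        if_congr (and_iff_right rfl) rfl rfl, hu2]
    by_cases h1 : symmDiff A S' ∈ F
    · by_cases h2 : insert a (symmDiff A S') ∈ F
      · have : symmDiff A S' ∉ preEmpty F a := by
          simp [preEmpty, h2]
        simp [h1, h2, this]
      · have : symmDiff A S' ∈ preEmpty F a := by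
          simp [preEmpty, ha1, h1, h2]
        simp [h1, h2, this]
    · have h2 : insert a (symmDiff A S') ∉ F := by
        intro h2
        exact h1 (hF _ h2 _ (Finset.subset_insert _ _))
      have : symmDiff A S' ∉ preEmpty F a := by
        simp [preEmpty, h1]
      simp [h1, h2, this]
  · have hne : insert a S' ≠ insert c S' := fun h => hac ((insert_eq_insert_iff' hc).mp h)
    rw [if_neg (fun h => hac (hiff1.mp h.2)), if_neg (fun h => hac (hiff2.mp h.2)),
        if_neg (fun h => hne h.1)]
    ring

end StepA

/-- Formula for `Λ(F)_{(A, A ∪ {a})}` for subset-closed `F`; in particular it is nonnegative. -/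
theorem lam_formula_subsetClosed (m : ℕ) (hm : 1 ≤ m) (F : Finset (Finset (Fin m)))
    (hF : IsSubsetClosed F) (a : Fin m) (A : Finset (Fin m)) (hA : a ∉ A) :
    LamW F A (insert a A)
        = ∑ B ∈ preEmpty F a,
            ((symmDiff A B).card.factorial * (m - 1 - (symmDiff A B).card).factorial : ℝ) ∧
      0 ≤ LamW F A (insert a A) := by
  classical
  have key : LamW F A (insert a A)
      = ∑ B ∈ preEmpty F a,
          ((symmDiff A B).card.factorial * (m - 1 - (symmDiff A B).card).factorial : ℝ) := by
    rw [LamW]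
    have h1 : ∀ σ : Equiv.Perm (Fin m),
        (∑ C ∈ F, ∑ k ∈ Finset.Icc 1 m,
          ((if Tpath σ C (k-1) = A ∧ Tpath σ C k = insert a A then (1:ℝ) else 0)
            - (if Tpath σ C (k-1) = insert a A ∧ Tpath σ C k = A then (1:ℝ) else 0)))
        = ∑ k ∈ Finset.Icc 1 m, ∑ B ∈ preEmpty F a,
            (if insert a (initImage σ (k-1)) = initImage σ k
                ∧ symmDiff A (initImage σ (k-1)) = B
              then (1:ℝ) else 0) := by
      intro σ
      rw [Finset.sum_comm]
      refine Finset.sum_congr rfl fun k hk => ?_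
      obtain ⟨hk1, hk2⟩ := Finset.mem_Icc.mp hk
      have hklt : k - 1 < m := by omega
      have hk1' : k - 1 + 1 = k := by omega
      have hstep : initImage σ k = insert (σ ⟨k-1, hklt⟩) (initImage σ (k-1)) := by
        conv_lhs => rw [← hk1']
        exact initImage_succ σ hklt
      have hc : σ ⟨k-1, hklt⟩ ∉ initImage σ (k-1) := initImage_not_mem σ hklt
      have e0 : (∑ C ∈ F,
          ((if Tpath σ C (k-1) = A ∧ Tpath σ C k = insert a A then (1:ℝ) else 0)
            - (if Tpath σ C (k-1) = insert a A ∧ Tpath σ C k = A then (1:ℝ) else 0)))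
          = if insert a (initImage σ (k-1)) = initImage σ k
              ∧ symmDiff A (initImage σ (k-1)) ∈ preEmpty F a then 1 else 0 := by
        have h3 := stepA F hF a A hA (initImage σ (k-1)) (σ ⟨k-1, hklt⟩) hc
        rw [← hstep] at h3
        exact h3
      rw [e0, mem_to_sum]
    rw [Finset.sum_congr rfl (fun σ _ => h1 σ)]
    rw [Finset.sum_congr rfl (fun σ _ => Finset.sum_comm)]
    rw [Finset.sum_comm]
    refine Finset.sum_congr rfl fun B hB => ?_
    obtain ⟨-, haB, -, -⟩ :
        B ∈ Finset.univ ∧ a ∉ B ∧ B ∈ F ∧ insert a B ∉ F := by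
      simpa [preEmpty] using hB
    have haS : a ∉ symmDiff A B := by
      simp [Finset.mem_symmDiff, hA, haB]
    have hs : (symmDiff A B).card < m := by
      have h5 : symmDiff A B ⊂ Finset.univ :=
        Finset.ssubset_univ_iff.mpr (fun h => haS (h.symm ▸ Finset.mem_univ a))
      have h6 := Finset.card_lt_card h5
      rwa [Finset.card_univ, Fintype.card_fin] at h6
    have h2 : ∀ σ : Equiv.Perm (Fin m),
        (∑ k ∈ Finset.Icc 1 m,
          if insert a (initImage σ (k-1)) = initImage σ k
              ∧ symmDiff A (initImage σ (k-1)) = B then (1:ℝ) else 0)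
        = if σ ⟨(symmDiff A B).card, hs⟩ = a ∧ initImage σ (symmDiff A B).card = symmDiff A B
            then (1:ℝ) else 0 := by
      intro σ
      have hzero : ∀ k ∈ Finset.Icc 1 m, k ≠ (symmDiff A B).card + 1 →
          (if insert a (initImage σ (k-1)) = initImage σ k
              ∧ symmDiff A (initImage σ (k-1)) = B then (1:ℝ) else 0) = 0 := by
        intro k hk hne
        obtain ⟨hk1, hk2⟩ := Finset.mem_Icc.mp hk
        rw [if_neg]
        rintro ⟨h7, h8⟩
        have h9 : initImage σ (k-1) = symmDiff A B := by
          have h9' := congrArg (symmDiff A) h8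
          rwa [symmDiff_symmDiff_cancel_left] at h9'
        have h10 : (initImage σ (k-1)).card = k - 1 := initImage_card σ (by omega)
        rw [h9] at h10
        exact hne (by omega)
      rw [Finset.sum_eq_single_of_mem ((symmDiff A B).card + 1)
        (Finset.mem_Icc.mpr ⟨by omega, by omega⟩) hzero]
      simp only [Nat.add_sub_cancel]
      have hstep := initImage_succ σ hs
      have hc := initImage_not_mem σ hs
      refine if_congr ?_ rfl rfl
      constructor
      · rintro ⟨ha1, ha2⟩
        have ha2' : initImage σ (symmDiff A B).card = symmDiff A B := by
          have h9' := congrArg (symmDiff A) ha2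
          rwa [symmDiff_symmDiff_cancel_left] at h9'
        refine ⟨?_, ha2'⟩
        rw [hstep, ha2'] at ha1
        rw [ha2'] at hc
        exact ((insert_eq_insert_iff' hc).mp ha1).symm
      · rintro ⟨hb1, hb2⟩
        refine ⟨?_, ?_⟩
        · rw [hstep, hb1, hb2]
        · rw [hb2, symmDiff_symmDiff_cancel_left]
    rw [Finset.sum_congr rfl (fun σ _ => h2 σ), count_perm a (symmDiff A B) haS hs]
    push_cast
    ring
  refine ⟨key, ?_⟩
  rw [key]
  positivity
end

section
/- Fix m ≥ 1. If F is a maximal intersecting subfamily of P([m]), then Σ_{a∈[m]} Λ(F*)_{(∅,{a})} = m!. -/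
open Finset

variable {m : ℕ}

section Aux
variable {m : ℕ}

lemma symmDiff_singleton_of_not_mem {α : Type*} [DecidableEq α] {s : Finset α} {b : α}
    (h : b ∉ s) : symmDiff s {b} = insert b s := by
  ext x
  simp only [Finset.mem_symmDiff, Finset.mem_singleton, Finset.mem_insert]
  by_cases hx : x = b <;> simp [hx, h] <;> tauto

lemma tpath_zero (σ : Equiv.Perm (Fin m)) (C : Finset (Fin m)) : Tpath σ C 0 = C := by
  simp [Tpath]

lemma tpath_top (σ : Equiv.Perm (Fin m)) (C : Finset (Fin m)) : Tpath σ C m = Cᶜ := by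
  have h1 : (Finset.univ.filter fun i : Fin m => (i : ℕ) < m) = Finset.univ := by
    ext i; simp [i.isLt]
  have h2 : Finset.univ.image ⇑σ = (Finset.univ : Finset (Fin m)) := by
    ext i
    simp only [Finset.mem_image, Finset.mem_univ, true_and, iff_true]
    exact ⟨σ.symm i, by simp⟩
  simp only [Tpath, h1, h2]
  ext x
  simp [Finset.mem_symmDiff]

lemma tpath_succ (σ : Equiv.Perm (Fin m)) (C : Finset (Fin m)) (k : ℕ) (hk : k < m) :
    Tpath σ C (k + 1) = symmDiff (Tpath σ C k) {σ ⟨k, hk⟩} := by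
  unfold Tpath
  rw [symmDiff_assoc]
  congr 1
  have hins : (Finset.univ.filter fun i : Fin m => (i : ℕ) < k + 1)
      = insert ⟨k, hk⟩ (Finset.univ.filter fun i : Fin m => (i : ℕ) < k) := by
    ext i
    simp only [Finset.mem_filter, Finset.mem_univ, true_and, Finset.mem_insert, Fin.ext_iff]
    omega
  have hnot : σ ⟨k, hk⟩ ∉ (Finset.univ.filter fun i : Fin m => (i : ℕ) < k).image σ := by
    simp only [Finset.mem_image, Finset.mem_filter, Finset.mem_univ, true_and, not_exists]
    rintro i ⟨hi, he⟩
    have := σ.injective he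
    subst this
    simp at hi
  rw [hins, Finset.image_insert, ← symmDiff_singleton_of_not_mem hnot]

end Aux

/-- For a maximal intersecting family `F`, the minimal axis crossings of `Λ(F*)` sum to `m!`. -/
theorem lam_sum_eq_factorial (m : ℕ) (hm : 1 ≤ m) (F : Finset (Finset (Fin m)))
    (hF : IsMaxIntersecting F) :
    ∑ a : Fin m, LamW (dualFam F) ∅ {a} = (m.factorial : ℝ) := by
  classical
  -- basic facts about F
  have hne : (∅ : Finset (Fin m)) ∉ F := by
    intro h
    simpa using hF.1 _ h _ h
  have huniv : (Finset.univ : Finset (Fin m)) ∈ F := by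
    have hsub : F ⊆ insert Finset.univ F := Finset.subset_insert _ _
    have hint : IsIntersecting (insert Finset.univ F) := by
      intro A hA B hB
      have hANe : A.Nonempty := by
        rcases Finset.mem_insert.1 hA with h | h
        · subst h; exact ⟨⟨0, hm⟩, Finset.mem_univ _⟩
        · exact Finset.nonempty_iff_ne_empty.2 fun he => hne (he ▸ h)
      rcases Finset.mem_insert.1 hA with h | h <;> rcases Finset.mem_insert.1 hB with h' | h'
      · subst h; subst h'; simpa using hANe
      · subst h
        have : B.Nonempty := Finset.nonempty_iff_ne_empty.2 fun he => hne (he ▸ h')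
        simpa using this
      · subst h'
        simpa using hANe
      · exact hF.1 _ h _ h'
    exact hF.2 _ hint hsub (Finset.mem_insert_self _ _)
  have hH0 : (∅ : Finset (Fin m)) ∈ dualFam F :=
    Finset.mem_image.2 ⟨Finset.univ, huniv, by simp⟩
  have hH1 : (Finset.univ : Finset (Fin m)) ∉ dualFam F := by
    simp only [dualFam, Finset.mem_image, not_exists]
    rintro A ⟨hA, hAc⟩
    have : A = ∅ := by
      have := congrArg (·ᶜ) hAc
      simpa using this
    exact hne (this ▸ hA)
  -- the key per-(σ, C) computation
  have key : ∀ σ : Equiv.Perm (Fin m), ∀ C : Finset (Fin m),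
      (∑ a : Fin m, ∑ k ∈ Finset.Icc 1 m,
        ((if Tpath σ C (k - 1) = ∅ ∧ Tpath σ C k = {a} then (1 : ℝ) else 0)
          - (if Tpath σ C (k - 1) = {a} ∧ Tpath σ C k = ∅ then (1 : ℝ) else 0)))
      = (if C = ∅ then (1 : ℝ) else 0) - (if C = Finset.univ then (1 : ℝ) else 0) := by
    intro σ C
    set f : ℕ → ℝ := fun k => if Tpath σ C k = ∅ then (1 : ℝ) else 0 with hf
    rw [Finset.sum_comm]
    have step : ∀ k ∈ Finset.Icc 1 m,
        (∑ a : Fin m,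
          ((if Tpath σ C (k - 1) = ∅ ∧ Tpath σ C k = {a} then (1 : ℝ) else 0)
            - (if Tpath σ C (k - 1) = {a} ∧ Tpath σ C k = ∅ then (1 : ℝ) else 0)))
        = f (k - 1) - f k := by
      intro k hk
      simp only [Finset.mem_Icc] at hk
      obtain ⟨j, rfl⟩ : ∃ j, k = j + 1 := ⟨k - 1, by omega⟩
      have hj : j < m := by omega
      set b := σ ⟨j, hj⟩ with hb
      have hT : Tpath σ C (j + 1) = symmDiff (Tpath σ C j) {b} := tpath_succ σ C j hj
      simp only [Nat.add_sub_cancel]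
      rw [Finset.sum_sub_distrib]
      congr 1
      · by_cases h : Tpath σ C j = ∅
        · have hT1 : Tpath σ C (j + 1) = {b} := by
            rw [hT, h]; simp
          simp [h, hT1, hf, Finset.singleton_inj, Finset.sum_ite_eq]
        · simp [hf, h]
      · by_cases h : Tpath σ C (j + 1) = ∅
        · have hTj : Tpath σ C j = {b} := by
            have := h
            rw [hT] at this
            rwa [← Finset.bot_eq_empty, symmDiff_eq_bot] at this
          simp [h, hTj, hf, Finset.singleton_inj, Finset.sum_ite_eq]
        · simp [hf, h]
    rw [Finset.sum_congr rfl step]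
    have : ∑ k ∈ Finset.Icc 1 m, (f (k - 1) - f k) = ∑ i ∈ Finset.range m, (f i - f (i + 1)) := by
      rw [show Finset.Icc 1 m = Finset.Ico 1 (m + 1) from (Finset.Ico_add_one_right_eq_Icc 1 m).symm,
        Finset.sum_Ico_eq_sum_range]
      apply Finset.sum_congr (by congr 1)
      intro i _
      have e1 : 1 + i - 1 = i := by omega
      have e2 : 1 + i = i + 1 := by omega
      rw [e1, e2]
    rw [this, Finset.sum_range_sub' f m, hf]
    simp only [tpath_zero, tpath_top]
    congr 1
    have : Cᶜ = ∅ ↔ C = Finset.univ := by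
      constructor
      · intro h
        have := congrArg (·ᶜ) h
        simpa using this
      · intro h; simp [h]
    simp [this]
  -- put it together
  unfold LamW
  rw [Finset.sum_comm]
  have : ∀ σ : Equiv.Perm (Fin m),
      (∑ a : Fin m, ∑ C ∈ dualFam F, ∑ k ∈ Finset.Icc 1 m,
        ((if Tpath σ C (k - 1) = ∅ ∧ Tpath σ C k = {a} then (1 : ℝ) else 0)
          - (if Tpath σ C (k - 1) = {a} ∧ Tpath σ C k = ∅ then (1 : ℝ) else 0))) = 1 := by
    intro σ
    rw [Finset.sum_comm]
    rw [Finset.sum_congr rfl (fun C _ => key σ C)]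
    rw [Finset.sum_sub_distrib]
    rw [Finset.sum_ite_eq' (dualFam F) (∅ : Finset (Fin m)) (fun _ => (1 : ℝ)), if_pos hH0]
    have : (∑ C ∈ dualFam F, if C = Finset.univ then (1 : ℝ) else 0) = 0 := by
      apply Finset.sum_eq_zero
      intro C hC
      have : C ≠ Finset.univ := fun h => hH1 (h ▸ hC)
      simp [this]
    rw [this]
    simp
  rw [Finset.sum_congr rfl (fun σ _ => this σ)]
  simp [Finset.card_univ, Fintype.card_perm]
end

section
/- Fix m ≥ 1. If F is a central maximal intersecting subfamily of P([m]), a ∈ [m], and B ⊆ [m]\{a} satisfies B ∈ F* and B ∪ {a} ∉ F*, then ⌊(m−1)/2⌋ ≤ |B| ≤ ⌈(m−1)/2⌉. -/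
open Finset

variable {m : ℕ}

/-! A maximal intersecting family is an up-set, and it meets every complementary pair
`{A, Aᶜ}`: otherwise `A` is disjoint from some member `C`, so `C ⊆ Aᶜ` forces `Aᶜ` into the family.
Hence `B ∈ F*` gives `Bᶜ ∈ F`, and `insert a B ∉ F*` gives `insert a B ∈ F`; centrality of these
two members yields `m ≤ 2 (m - |B|)` and `m ≤ 2 (|B| + 1)`. -/

theorem mem_dualFam {F : Finset (Finset (Fin m))} {B : Finset (Fin m)} :
    B ∈ dualFam F ↔ Bᶜ ∈ F := by
  simp only [dualFam, mem_image]
  exact ⟨fun ⟨C, hC, hCB⟩ => hCB ▸ (compl_compl C).symm ▸ hC, fun h => ⟨Bᶜ, h, compl_compl B⟩⟩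

namespace IsIntersecting

variable {F : Finset (Finset (Fin m))} {A : Finset (Fin m)}

theorem nonempty_of_mem (hF : IsIntersecting F) (hA : A ∈ F) : A.Nonempty := by
  simpa using hF A hA A hA

theorem insert (hF : IsIntersecting F) (hA : A.Nonempty) (hAF : ∀ C ∈ F, (A ∩ C).Nonempty) :
    IsIntersecting (insert A F) := by
  intro X hX Y hY
  rcases mem_insert.mp hX with rfl | hXF <;> rcases mem_insert.mp hY with rfl | hYF
  · simpa using hA
  · exact hAF Y hYF
  · exact inter_comm X _ ▸ hAF X hXF
  · exact hF X hXF Y hYF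

end IsIntersecting

namespace IsMaxIntersecting

variable {F : Finset (Finset (Fin m))} {A C : Finset (Fin m)}

theorem mem_of_forall_inter_nonempty (hF : IsMaxIntersecting F) (hA : A.Nonempty)
    (hAF : ∀ C ∈ F, (A ∩ C).Nonempty) : A ∈ F :=
  hF.2 _ (hF.1.insert hA hAF) (subset_insert A F) (mem_insert_self A F)

theorem mem_of_superset (hF : IsMaxIntersecting F) (hC : C ∈ F) (hCA : C ⊆ A) : A ∈ F :=
  hF.mem_of_forall_inter_nonempty ((hF.1.nonempty_of_mem hC).mono hCA)
    fun D hD => (hF.1 C hC D hD).mono (inter_subset_inter_right hCA)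

theorem univ_mem [Nonempty (Fin m)] (hF : IsMaxIntersecting F) : univ ∈ F :=
  hF.mem_of_forall_inter_nonempty univ_nonempty fun C hC => by
    simpa using hF.1.nonempty_of_mem hC

theorem exists_disjoint_of_notMem [Nonempty (Fin m)] (hF : IsMaxIntersecting F) (hA : A ∉ F) :
    ∃ C ∈ F, Disjoint A C := by
  by_contra! hmeet
  simp only [not_disjoint_iff_nonempty_inter] at hmeet
  exact hA (hF.mem_of_forall_inter_nonempty (by simpa using hmeet univ hF.univ_mem) hmeet)

theorem mem_or_compl_mem [Nonempty (Fin m)] (hF : IsMaxIntersecting F) (A : Finset (Fin m)) :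
    A ∈ F ∨ Aᶜ ∈ F := by
  refine or_iff_not_imp_left.mpr fun hA => ?_
  obtain ⟨C, hC, hAC⟩ := hF.exists_disjoint_of_notMem hA
  exact hF.mem_of_superset hC (subset_compl_iff_disjoint_left.mpr hAC)

end IsMaxIntersecting

theorem central_fiber_size_general (m : ℕ) (F : Finset (Finset (Fin m)))
    (hF : IsMaxIntersecting F) (hcentral : ∀ A ∈ F, m ≤ 2 * A.card)
    (a : Fin m) (B : Finset (Fin m))
    (hB : B ∈ dualFam F) (hBa : insert a B ∉ dualFam F) :
    (m - 1) / 2 ≤ B.card ∧ B.card ≤ m / 2 := by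
  have : Nonempty (Fin m) := ⟨a⟩
  have hBc : Bᶜ ∈ F := mem_dualFam.mp hB
  have hinsert : insert a B ∈ F :=
    (hF.mem_or_compl_mem (insert a B)).resolve_right (mt mem_dualFam.mpr hBa)
  have hlower := (hcentral _ hinsert).trans (Nat.mul_le_mul_left 2 (card_insert_le a B))
  have hupper := hcentral _ hBc
  rw [card_compl, Fintype.card_fin] at hupper
  have hBm : B.card ≤ m := card_le_univ B |>.trans_eq (Fintype.card_fin m)
  omega

/-- For a central maximal intersecting family `F`, any `B ⊆ [m] \ {a}` with `B ∈ F*` and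
`B ∪ {a} ∉ F*` satisfies `⌊(m-1)/2⌋ ≤ |B| ≤ ⌈(m-1)/2⌉`. -/
theorem central_fiber_size (m : ℕ) (hm : 1 ≤ m) (F : Finset (Finset (Fin m)))
    (hF : IsMaxIntersecting F) (hcentral : ∀ A ∈ F, m ≤ 2 * A.card)
    (a : Fin m) (B : Finset (Fin m)) (haB : a ∉ B)
    (hB : B ∈ dualFam F) (hBa : insert a B ∉ dualFam F) :
    (m - 1) / 2 ≤ B.card ∧ B.card ≤ m / 2 :=
  central_fiber_size_general m F hF hcentral a B hB hBa
end

section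
/- Let n ≥ 1 and put m = 2n+1. Let F be a central maximal intersecting subfamily of P([m]), and let G be an intersecting family of n-element subsets of [m]. Then H = (F \ G*) ∪ G is a maximal intersecting subfamily of P([m]). -/
open Finset

variable {m : ℕ}

lemma inter_nonempty_of_large {A B : Finset (Fin m)} (h : m < A.card + B.card) :
    (A ∩ B).Nonempty := by
  rw [← Finset.card_pos]
  have h1 : (A ∪ B).card ≤ m := by
    simpa using Finset.card_le_univ (A ∪ B)
  have h2 := Finset.card_union_add_card_inter A B
  omega

/-- Modifying a central maximal intersecting family of `P([2n+1])` by an intersecting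
family of `n`-sets yields a maximal intersecting family. -/
theorem near_central_maxIntersecting (n : ℕ) (hn : 1 ≤ n)
    (F : Finset (Finset (Fin (2 * n + 1)))) (hF : IsMaxIntersecting F)
    (hcentral : ∀ A ∈ F, 2 * n + 1 ≤ 2 * A.card)
    (G : Finset (Finset (Fin (2 * n + 1)))) (hGi : IsIntersecting G)
    (hGk : ∀ A ∈ G, A.card = n) :
    IsMaxIntersecting ((F \ dualFam G) ∪ G) := by
  obtain ⟨hFi, hFmax⟩ := hF
  -- F contains every set of card ≥ n+1
  have hbig : ∀ A : Finset (Fin (2 * n + 1)), n + 1 ≤ A.card → A ∈ F := by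
    intro A hA
    by_contra hA'
    have hins : IsIntersecting (insert A F) := by
      have hcard : ∀ D ∈ insert A F, n + 1 ≤ D.card := by
        intro D hD
        rcases Finset.mem_insert.mp hD with rfl | hD
        · exact hA
        · have := hcentral D hD; omega
      intro B hB C hC
      exact inter_nonempty_of_large (by have := hcard B hB; have := hcard C hC; omega)
    exact hA' (hFmax _ hins (Finset.subset_insert _ _) (Finset.mem_insert_self _ _))
  set H := (F \ dualFam G) ∪ G with hH
  have hFsize : ∀ A ∈ F, n + 1 ≤ A.card := fun A hA => by have := hcentral A hA; omega
  -- a member of F \ G* meets every member of G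
  have hkey : ∀ A ∈ F \ dualFam G, ∀ B ∈ G, (A ∩ B).Nonempty := by
    intro A hA B hB
    rw [Finset.mem_sdiff] at hA
    by_contra hne
    have hdisj : Disjoint A B := by
      rw [Finset.disjoint_iff_inter_eq_empty]
      exact Finset.not_nonempty_iff_eq_empty.mp hne
    have hsub : A ⊆ Bᶜ := le_compl_iff_disjoint_right.mpr hdisj
    have hcBc : Bᶜ.card = n + 1 := by
      rw [Finset.card_compl, Fintype.card_fin, hGk B hB]; omega
    have : A = Bᶜ := Finset.eq_of_subset_of_card_le hsub
      (by rw [hcBc]; exact hFsize A hA.1)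
    exact hA.2 (Finset.mem_image.mpr ⟨B, hB, this.symm⟩)
  -- H intersecting
  have hHi : IsIntersecting H := by
    intro A hA B hB
    rcases Finset.mem_union.mp hA with hA' | hA' <;>
      rcases Finset.mem_union.mp hB with hB' | hB'
    · exact inter_nonempty_of_large (by
        have := hFsize A (Finset.mem_sdiff.mp hA').1
        have := hFsize B (Finset.mem_sdiff.mp hB').1
        omega)
    · exact hkey A hA' B hB'
    · have := hkey B hB' A hA'
      rwa [Finset.inter_comm] at this
    · exact hGi A hA' B hB'
  -- completeness: A ∈ H or Aᶜ ∈ H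
  have hcomp : ∀ A : Finset (Fin (2 * n + 1)), A ∈ H ∨ Aᶜ ∈ H := by
    intro A
    by_cases hc : n + 1 ≤ A.card
    · by_cases hd : A ∈ dualFam G
      · obtain ⟨C, hC, hCe⟩ := Finset.mem_image.mp hd
        right
        have : Aᶜ = C := by rw [← hCe, compl_compl]
        rw [this]
        exact Finset.mem_union_right _ hC
      · exact Or.inl (Finset.mem_union_left _ (Finset.mem_sdiff.mpr ⟨hbig A hc, hd⟩))
    · have hcc : n + 1 ≤ Aᶜ.card := by
        rw [Finset.card_compl, Fintype.card_fin]
        have : A.card ≤ 2 * n + 1 := by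
          simpa using Finset.card_le_univ A
        omega
      by_cases hd : Aᶜ ∈ dualFam G
      · obtain ⟨C, hC, hCe⟩ := Finset.mem_image.mp hd
        left
        have : A = C := by
          have := congrArg compl hCe
          simpa using this.symm
        rw [this]
        exact Finset.mem_union_right _ hC
      · exact Or.inr (Finset.mem_union_left _ (Finset.mem_sdiff.mpr ⟨hbig _ hcc, hd⟩))
  refine ⟨hHi, fun G' hG'i hHG' B hB => ?_⟩
  by_contra hBH
  rcases hcomp B with h | h
  · exact hBH h
  · have := hG'i B hB Bᶜ (hHG' h)
    simp at this
end
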